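/- For the Jasso-Hernandez–Rong complex of the bigon P₂ (0 → A⊗A → A ⊕ A → A⊗B → 0 with A = ℤ[t]/(t²), B = ℤ[w]/(w²)): H⁰_T(P₂) ≅ ℤ(1,0) ⊕ ℤ(2,0), H¹_T(P₂) = 0, and H²_T(P₂) ≅ ℤ(0,1) ⊕ ℤ(1,1). -/

import Mathlib

/-! Everything is computed on the Boolean bases. Since `d⁰ φ = (m φ, m φ)` with `m` the
multiplication, `ker d⁰` is spanned by `1⊗t − t⊗1` (degree `(1,0)`) and `t⊗t`
(degree `(2,0)`), and `im d⁰` is the diagonal of `A ⊕ A`, which is exactly `ker d¹`, so `H¹`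
vanishes. The image of `d¹` is `A ⊗ 1`, leaving `A ⊗ w`, spanned by `1⊗w` and `t⊗w` in
degrees `(0,1)` and `(1,1)`. -/

/-- The pushforward of free `ℤ`-modules along a partially defined map of bases. -/
noncomputable def pushMap {α β : Type*} [Fintype α] [DecidableEq β]
    (g : α → Option β) : (α → ℤ) →ₗ[ℤ] (β → ℤ) where
  toFun φ b := ∑ a : α, if g a = some b then φ a else 0
  map_add' φ ψ := by
    funext b
    simp only [Pi.add_apply]
    rw [← Finset.sum_add_distrib]
    refine Finset.sum_congr rfl fun a _ => ?_
    by_cases h : g a = some b <;> simp [h]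
  map_smul' c φ := by
    funext b
    simp only [RingHom.id_apply, Pi.smul_apply, smul_eq_mul, Finset.mul_sum]
    refine Finset.sum_congr rfl fun a _ => ?_
    by_cases h : g a = some b <;> simp [h]

/-- The homogeneous part of bidegree `(n, k)` of a free `ℤ`-module with a
bigraded basis `ι`, the bidegree of a basis element being given by `dg`. -/
def degPart {ι : Type} (dg : ι → ℕ × ℕ) (n k : ℕ) : Submodule ℤ (ι → ℤ) where
  carrier := {φ | ∀ v, dg v ≠ (n, k) → φ v = 0}
  add_mem' := by
    intro φ ψ hφ hψ v hv
    have : φ v + ψ v = 0 := by rw [hφ v hv, hψ v hv, add_zero]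
    exact this
  zero_mem' := by intro v _; rfl
  smul_mem' := by
    intro c φ hφ v hv
    have : c * φ v = 0 := by rw [hφ v hv, mul_zero]
    exact this

namespace BigonTutte

/- The Jasso-Hernandez–Rong complex of the bigon `P₂`:
`0 → A⊗A → A ⊕ A → A⊗B → 0` with `A = ℤ[t]/(t²)`, `B = ℤ[w]/(w²)`.
Modules are encoded as free `ℤ`-modules on Boolean bases, `false` standing
for `1` and `true` for `t` (resp. `w`). -/

/-- `C⁰ = A ⊗ A` (one `A`-factor per component of the edgeless subgraph). -/
abbrev C0 := (Bool × Bool) → ℤ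
/-- `C¹ = A ⊕ A` (one summand per one-edge subgraph, each connected). -/
abbrev C1 := (Bool ⊕ Bool) → ℤ
/-- `C² = A ⊗ B` (one component and one cycle for the full subgraph). -/
abbrev C2 := (Bool × Bool) → ℤ

/-- Multiplication `A ⊗ A → A` as a partially defined map of bases
(`t ⊗ t ↦ t² = 0`). -/
def mulMap : Bool × Bool → Option Bool :=
  fun v => if v.1 ∧ v.2 then none else some (v.1 || v.2)

/-- The differential `d⁰ : A⊗A → A ⊕ A`, multiplication into each summand. -/
noncomputable def d0 : C0 →ₗ[ℤ] C1 :=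
  pushMap (fun v => (mulMap v).map Sum.inl) + pushMap (fun v => (mulMap v).map Sum.inr)

/-- The differential `d¹ : A ⊕ A → A⊗B`, the unit map `ℤ → B` on the second
tensor factor, with signs `d¹ = d_{(*,1)} − d_{(1,*)}`. -/
noncomputable def d1 : C1 →ₗ[ℤ] C2 :=
  pushMap (fun s => match s with
    | Sum.inl _ => none
    | Sum.inr x => some (x, false)) -
  pushMap (fun s => match s with
    | Sum.inl x => some (x, false)
    | Sum.inr _ => none)

/-- Bidegree on the basis of `C⁰`: the number of `t`'s. -/
def dg0 : Bool × Bool → ℕ × ℕ := fun v => (v.1.toNat + v.2.toNat, 0)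
/-- Bidegree on the basis of `C¹`. -/
def dg1 : Bool ⊕ Bool → ℕ × ℕ := fun s => (Sum.elim Bool.toNat Bool.toNat s, 0)
/-- Bidegree on the basis of `C² = A ⊗ B`. -/
def dg2 : Bool × Bool → ℕ × ℕ := fun v => (v.1.toNat, v.2.toNat)

/-- The bidegree-`(n,k)` part of `H⁰_T(P₂) = ker d⁰`. -/
noncomputable def H0piece (n k : ℕ) : Type :=
  ↥(degPart dg0 n k ⊓ LinearMap.ker d0)

/-- The bidegree-`(n,k)` part of `H¹_T(P₂) = ker d¹ / im d⁰`. -/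
noncomputable def H1piece (n k : ℕ) : Type :=
  ↥(degPart dg1 n k ⊓ LinearMap.ker d1) ⧸
    Submodule.comap (degPart dg1 n k ⊓ LinearMap.ker d1).subtype (LinearMap.range d0)

/-- The bidegree-`(n,k)` part of `H²_T(P₂) = C² / im d¹`. -/
noncomputable def H2piece (n k : ℕ) : Type :=
  ↥(degPart dg2 n k) ⧸
    Submodule.comap (degPart dg2 n k).subtype (LinearMap.range d1)

noncomputable instance (n k : ℕ) : AddCommGroup (H0piece n k) := by
  unfold H0piece; infer_instance
noncomputable instance (n k : ℕ) : Module ℤ (H0piece n k) := by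
  unfold H0piece; infer_instance
noncomputable instance (n k : ℕ) : AddCommGroup (H1piece n k) := by
  unfold H1piece; infer_instance
noncomputable instance (n k : ℕ) : Module ℤ (H1piece n k) := by
  unfold H1piece; infer_instance
noncomputable instance (n k : ℕ) : AddCommGroup (H2piece n k) := by
  unfold H2piece; infer_instance
noncomputable instance (n k : ℕ) : Module ℤ (H2piece n k) := by
  unfold H2piece; infer_instance

end BigonTutte

section

variable {R M : Type*} [Ring R] [AddCommGroup M] [Module R M]

theorem Submodule.subsingleton_quotient_comap_subtype_of_le {p q : Submodule R M}
    (h : p ≤ q) : Subsingleton (p ⧸ q.comap p.subtype) :=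
  Submodule.Quotient.subsingleton_iff.2 (Submodule.comap_subtype_eq_top.2 h)

noncomputable def Submodule.quotientComapSubtypeEquivOfDisjoint {p q : Submodule R M}
    (h : Disjoint p q) : (p ⧸ q.comap p.subtype) ≃ₗ[R] p :=
  Submodule.quotEquivOfEqBot _ (Submodule.disjoint_iff_comap_eq_bot.1 h)

theorem Submodule.nonempty_linearEquiv_of_eval {ι : Type*} {p : Submodule R (ι → R)} (i : ι)
    (hsurj : ∃ e ∈ p, e i = 1) (hinj : ∀ φ ∈ p, φ i = 0 → φ = 0) : Nonempty (p ≃ₗ[R] R) := by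
  refine ⟨LinearEquiv.ofBijective ((LinearMap.proj i).comp p.subtype) ⟨?_, fun c => ?_⟩⟩
  · refine (injective_iff_map_eq_zero _).2 fun φ hφ => Subtype.ext (hinj φ φ.2 hφ)
  · obtain ⟨e, he, hei⟩ := hsurj
    exact ⟨⟨c • e, p.smul_mem c he⟩, by simp [hei]⟩

theorem nonempty_linearEquiv_fin_ite (P : Prop) [Decidable P]
    (h₁ : P → Nonempty (M ≃ₗ[R] R)) (h₀ : ¬P → Subsingleton M) :
    Nonempty (M ≃ₗ[R] (Fin (if P then 1 else 0) → R)) := by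
  by_cases h : P
  · rw [if_pos h]
    exact (h₁ h).map (·.trans (LinearEquiv.funUnique (Fin 1) R R).symm)
  · rw [if_neg h]
    have := h₀ h
    exact ⟨.ofSubsingleton _ _⟩

end

theorem nonempty_degPart_equiv {ι : Type} [DecidableEq ι] (dg : ι → ℕ × ℕ) {n k : ℕ} (i : ι)
    (hi : ∀ j, dg j = (n, k) ↔ j = i) : Nonempty (degPart dg n k ≃ₗ[ℤ] ℤ) := by
  refine Submodule.nonempty_linearEquiv_of_eval i
    ⟨Pi.single i 1, fun j hj => ?_, by simp⟩ fun φ hφ hφi => funext fun j => ?_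
  · exact Pi.single_eq_of_ne (mt (hi j).2 hj) 1
  · by_cases hj : j = i
    · rw [hj, hφi, Pi.zero_apply]
    · exact hφ j (mt (hi j).1 hj)

namespace BigonTutte

open LinearMap

section Differentials

variable (φ : C0)

@[simp] theorem d0_apply_inl_false : d0 φ (Sum.inl false) = φ (false, false) := by
  simp [d0, pushMap, mulMap, Fintype.sum_prod_type]

@[simp] theorem d0_apply_inr_false : d0 φ (Sum.inr false) = φ (false, false) := by
  simp [d0, pushMap, mulMap, Fintype.sum_prod_type]

@[simp] theorem d0_apply_inl_true :
    d0 φ (Sum.inl true) = φ (false, true) + φ (true, false) := by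
  simp [d0, pushMap, mulMap, Fintype.sum_prod_type, add_comm (φ (true, false))]

@[simp] theorem d0_apply_inr_true :
    d0 φ (Sum.inr true) = φ (false, true) + φ (true, false) := by
  simp [d0, pushMap, mulMap, Fintype.sum_prod_type, add_comm (φ (true, false))]

end Differentials

@[simp] theorem d1_apply_false (φ : C1) (x : Bool) :
    d1 φ (x, false) = φ (Sum.inr x) - φ (Sum.inl x) := by
  cases x <;> simp [d1, pushMap]

@[simp] theorem d1_apply_true (φ : C1) (x : Bool) : d1 φ (x, true) = 0 := by
  cases x <;> simp [d1, pushMap]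

theorem mem_ker_d0 (φ : C0) :
    φ ∈ ker d0 ↔ φ (false, false) = 0 ∧ φ (false, true) + φ (true, false) = 0 := by
  simp [funext_iff, Sum.forall]

theorem mem_range_d0 (φ : C1) : φ ∈ range d0 ↔
    φ (Sum.inl false) = φ (Sum.inr false) ∧ φ (Sum.inl true) = φ (Sum.inr true) := by
  constructor
  · rintro ⟨ψ, rfl⟩
    simp
  · rintro ⟨hf, ht⟩
    refine ⟨Pi.single (false, false) (φ (Sum.inl false)) +
      Pi.single (false, true) (φ (Sum.inl true)), funext ?_⟩
    rintro ((_ | _) | (_ | _)) <;> simp [*]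

theorem mem_ker_d1 (φ : C1) : φ ∈ ker d1 ↔
    φ (Sum.inl false) = φ (Sum.inr false) ∧ φ (Sum.inl true) = φ (Sum.inr true) := by
  simp only [mem_ker, funext_iff, Prod.forall, Bool.forall_bool, d1_apply_false, d1_apply_true,
    Pi.zero_apply, sub_eq_zero, and_true]
  exact and_congr eq_comm eq_comm

theorem mem_range_d1 (φ : C2) : φ ∈ range d1 ↔ φ (false, true) = 0 ∧ φ (true, true) = 0 := by
  constructor
  · rintro ⟨ψ, rfl⟩
    simp
  · rintro ⟨hf, ht⟩
    refine ⟨Sum.elim 0 fun x => φ (x, false), funext ?_⟩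
    rintro ⟨_ | _, _ | _⟩ <;> simp [*]

theorem range_d0_eq_ker_d1 : range d0 = ker d1 := by
  ext φ
  rw [mem_range_d0, mem_ker_d1]

instance (n k : ℕ) : Subsingleton (H1piece n k) :=
  Submodule.subsingleton_quotient_comap_subtype_of_le (inf_le_right.trans range_d0_eq_ker_d1.ge)

theorem nonempty_H0piece_one_zero_equiv : Nonempty (H0piece 1 0 ≃ₗ[ℤ] ℤ) := by
  refine Submodule.nonempty_linearEquiv_of_eval (false, true)
    ⟨Pi.single (false, true) 1 - Pi.single (true, false) 1, ⟨?_, ?_⟩, by simp⟩ ?_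
  · rintro ⟨_ | _, _ | _⟩ h <;> simp_all [dg0]
  · rw [SetLike.mem_coe, mem_ker_d0]
    simp
  · rintro φ ⟨hdeg, hker⟩ hft
    rw [SetLike.mem_coe, mem_ker_d0, hft, zero_add] at hker
    have htt : φ (true, true) = 0 := hdeg (true, true) (by decide)
    ext ⟨_ | _, _ | _⟩ <;> simp [*]

theorem degPart_dg0_two_zero_le_ker_d0 : degPart dg0 2 0 ≤ ker d0 := fun φ hφ =>
  (mem_ker_d0 φ).2 ⟨hφ _ (by decide),
    by rw [hφ (false, true) (by decide), hφ (true, false) (by decide), add_zero]⟩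

theorem nonempty_H0piece_two_zero_equiv : Nonempty (H0piece 2 0 ≃ₗ[ℤ] ℤ) :=
  (nonempty_degPart_equiv dg0 (true, true) (by decide)).map
    ((LinearEquiv.ofEq _ _ (inf_eq_left.2 degPart_dg0_two_zero_le_ker_d0)).trans)

theorem subsingleton_H0piece {n k : ℕ} (h : ¬((n, k) = (1, 0) ∨ (n, k) = (2, 0))) :
    Subsingleton (H0piece n k) := by
  refine Submodule.subsingleton_iff_eq_bot.2 ((Submodule.eq_bot_iff _).2 ?_)
  rintro φ ⟨hdeg, hker⟩
  rw [SetLike.mem_coe, mem_ker_d0] at hker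
  have hft : φ (false, true) = 0 := hdeg _ fun h' => h (.inl h'.symm)
  have htf : φ (true, false) = 0 := hdeg _ fun h' => h (.inl h'.symm)
  have htt : φ (true, true) = 0 := hdeg _ fun h' => h (.inr h'.symm)
  ext ⟨_ | _, _ | _⟩ <;> simp [*]

theorem disjoint_degPart_dg2_range_d1 (n : ℕ) : Disjoint (degPart dg2 n 1) (range d1) := by
  refine Submodule.disjoint_def.2 fun φ hdeg hrange => ?_
  rw [mem_range_d1] at hrange
  have hff : φ (false, false) = 0 := hdeg _ (by simp [dg2])
  have htf : φ (true, false) = 0 := hdeg _ (by simp [dg2])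
  ext ⟨_ | _, _ | _⟩ <;> simp [*]

theorem nonempty_H2piece_toNat_one_equiv (b : Bool) : Nonempty (H2piece b.toNat 1 ≃ₗ[ℤ] ℤ) :=
  (nonempty_degPart_equiv dg2 (b, true) (by cases b <;> decide)).map
    ((Submodule.quotientComapSubtypeEquivOfDisjoint (disjoint_degPart_dg2_range_d1 _)).trans)

theorem subsingleton_H2piece {n k : ℕ} (h : ¬((n, k) = (0, 1) ∨ (n, k) = (1, 1))) :
    Subsingleton (H2piece n k) :=
  Submodule.subsingleton_quotient_comap_subtype_of_le fun φ hdeg =>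
    (mem_range_d1 φ).2
      ⟨hdeg _ fun h' => h (.inl h'.symm), hdeg _ fun h' => h (.inr h'.symm)⟩

end BigonTutte

open BigonTutte in
/-- The cohomology of the Jasso-Hernandez–Rong complex of the bigon `P₂`:
`H⁰_T(P₂) ≅ ℤ(1,0) ⊕ ℤ(2,0)`, `H¹_T(P₂) = 0`, `H²_T(P₂) ≅ ℤ(0,1) ⊕ ℤ(1,1)`
(each bigraded piece is free of the stated rank). -/
theorem tutte_cohomology_bigon :
    (∀ n k : ℕ, Nonempty (H0piece n k ≃ₗ[ℤ]
      (Fin (if (n, k) = (1, 0) ∨ (n, k) = (2, 0) then 1 else 0) → ℤ))) ∧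
    (∀ n k : ℕ, Nonempty (H1piece n k ≃ₗ[ℤ] (Fin 0 → ℤ))) ∧
    (∀ n k : ℕ, Nonempty (H2piece n k ≃ₗ[ℤ]
      (Fin (if (n, k) = (0, 1) ∨ (n, k) = (1, 1) then 1 else 0) → ℤ))) := by
  refine ⟨fun n k => nonempty_linearEquiv_fin_ite _ ?_ subsingleton_H0piece,
    fun n k => ⟨.ofSubsingleton _ _⟩,
    fun n k => nonempty_linearEquiv_fin_ite _ ?_ subsingleton_H2piece⟩
  · rintro (h | h) <;> cases h
    exacts [nonempty_H0piece_one_zero_equiv, nonempty_H0piece_two_zero_equiv]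
  · rintro (h | h) <;> cases h
    exacts [nonempty_H2piece_toNat_one_equiv false, nonempty_H2piece_toNat_one_equiv true]
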